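/- arXiv:2007.05958 — 2 statements merged into one kernel-verified Lean document; each statement's English description precedes it below -/
import Mathlib

section
/- Let (α_k)_{k≥0} be a sequence of non-negative integers with associated vectors X_k and denominators q_k, and let l > 0. Assume that d(X̂_{k−1}, X̂_k) → l, that d(X̂_{k−2} ⊕ X̂_k, X̂_{k−1}) → l, and that q_k/q_{k−1} → +∞. Then for every non-negative integer s, d(X̂_k ⊕_s X̂_{k−1}, X̂_k) → 0 and d((X̂_{k−2} ⊕ X̂_k) ⊕_s X̂_{k−1}, X̂_{k−2} ⊕ X̂_k) → 0 as k → ∞. -/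
open Filter Topology

/-- The vectors X_{-3}, X_{-2}, X_{-1}, X_0, X_1, … (indices shifted by 3),
with coordinates written as (q, p, r). -/
def Xv (a : ℕ → ℕ) : ℕ → ℤ × ℤ × ℤ
  | 0 => (0, 0, 1)
  | 1 => (1, 0, 0)
  | 2 => (1, 1, 0)
  | n + 3 => Xv a n + Xv a (n + 2) + (a n : ℤ) • Xv a (n + 1)

/-- The rational pair X̂ = (p/q, r/q) corresponding to the vector X = (q,p,r). -/
noncomputable def Xhat (v : ℤ × ℤ × ℤ) : ℝ × ℝ :=
  ((v.2.1 : ℝ) / (v.1 : ℝ), (v.2.2 : ℝ) / (v.1 : ℝ))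

/-- Euclidean distance on ℝ². -/
noncomputable def eucDist (a b : ℝ × ℝ) : ℝ :=
  Real.sqrt ((a.1 - b.1) ^ 2 + (a.2 - b.2) ^ 2)

lemma eucDist_comm' (a b : ℝ × ℝ) : eucDist a b = eucDist b a := by
  unfold eucDist; ring_nf

lemma Xv_q_nonneg (a : ℕ → ℕ) : ∀ n, 0 ≤ (Xv a n).1 := by
  intro n
  induction n using Nat.strong_induction_on with
  | _ n ih =>
    match n with
    | 0 => simp [Xv]
    | 1 => simp [Xv]
    | 2 => simp [Xv]
    | n + 3 =>
      have h0 := ih n (by omega)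
      have h1 := ih (n + 1) (by omega)
      have h2 := ih (n + 2) (by omega)
      show 0 ≤ (Xv a n + Xv a (n + 2) + (a n : ℤ) • Xv a (n + 1)).1
      simp only [Prod.fst_add, Prod.smul_fst, smul_eq_mul]
      have := mul_nonneg (Int.natCast_nonneg (a n)) h1
      linarith

lemma Xv_q_pos (a : ℕ → ℕ) : ∀ n, 0 < (Xv a (n + 1)).1 := by
  intro n
  induction n using Nat.strong_induction_on with
  | _ n ih =>
    match n with
    | 0 => simp [Xv]
    | 1 => simp [Xv]
    | n + 2 =>
      have h0 := Xv_q_nonneg a n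
      have h1 := Xv_q_nonneg a (n + 1)
      have h2 := ih (n + 1) (by omega)
      show 0 < (Xv a n + Xv a (n + 2) + (a n : ℤ) • Xv a (n + 1)).1
      simp only [Prod.fst_add, Prod.smul_fst, smul_eq_mul]
      have := mul_nonneg (Int.natCast_nonneg (a n)) h1
      linarith

lemma eucDist_mediant (s : ℕ) (X Y : ℤ × ℤ × ℤ) (hX : 0 < X.1) (hY : 0 < Y.1) :
    eucDist (Xhat (Y + (s : ℤ) • X)) (Xhat Y)
      = ((s : ℝ) * X.1) / ((Y.1 : ℝ) + s * X.1) * eucDist (Xhat X) (Xhat Y) := by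
  have hq : (0 : ℝ) < (Y.1 : ℝ) := by exact_mod_cast hY
  have hq' : (0 : ℝ) < (X.1 : ℝ) := by exact_mod_cast hX
  have hden : (0 : ℝ) < (Y.1 : ℝ) + s * X.1 := by positivity
  set c : ℝ := ((s : ℝ) * X.1) / ((Y.1 : ℝ) + s * X.1) with hc
  have hc0 : 0 ≤ c := by positivity
  have e1 : (Xhat (Y + (s : ℤ) • X)).1 - (Xhat Y).1 = c * ((Xhat X).1 - (Xhat Y).1) := by
    simp only [Xhat, Prod.fst_add, Prod.snd_add, Prod.smul_fst, Prod.smul_snd, smul_eq_mul, hc]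
    push_cast
    field_simp
    ring
  have e2 : (Xhat (Y + (s : ℤ) • X)).2 - (Xhat Y).2 = c * ((Xhat X).2 - (Xhat Y).2) := by
    simp only [Xhat, Prod.fst_add, Prod.snd_add, Prod.smul_fst, Prod.smul_snd, smul_eq_mul, hc]
    push_cast
    field_simp
    ring
  unfold eucDist
  rw [e1, e2, mul_pow, mul_pow, ← mul_add, Real.sqrt_mul (by positivity), Real.sqrt_sq hc0]

theorem dist_mediant_s_limit' (a : ℕ → ℕ) (l : ℝ) (hl : 0 < l)
    (h1 : Tendsto (fun k : ℕ => eucDist (Xhat (Xv a (k + 2))) (Xhat (Xv a (k + 3))))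
      atTop (𝓝 l))
    (h2 : Tendsto (fun k : ℕ => eucDist (Xhat (Xv a (k + 1) + Xv a (k + 3))) (Xhat (Xv a (k + 2))))
      atTop (𝓝 l))
    (h3 : Tendsto (fun k : ℕ => ((Xv a (k + 3)).1 : ℝ) / ((Xv a (k + 2)).1 : ℝ))
      atTop atTop)
    (s : ℕ) :
    Tendsto (fun k : ℕ =>
        eucDist (Xhat (Xv a (k + 3) + (s : ℤ) • Xv a (k + 2))) (Xhat (Xv a (k + 3))))
      atTop (𝓝 0) ∧
    Tendsto (fun k : ℕ =>
        eucDist (Xhat (Xv a (k + 1) + Xv a (k + 3) + (s : ℤ) • Xv a (k + 2)))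
          (Xhat (Xv a (k + 1) + Xv a (k + 3))))
      atTop (𝓝 0) := by
  set q : ℕ → ℝ := fun k => ((Xv a k).1 : ℝ) with hqdef
  have hqpos : ∀ k, 0 < q (k + 1) := fun k => by
    have := Xv_q_pos a k
    show (0 : ℝ) < ((Xv a (k + 1)).1 : ℝ)
    exact_mod_cast this
  have hqnn : ∀ k, 0 ≤ q k := fun k => by
    have := Xv_q_nonneg a k
    show (0 : ℝ) ≤ ((Xv a k).1 : ℝ)
    exact_mod_cast this
  constructor
  · -- first limit
    have heq : ∀ k : ℕ,
        eucDist (Xhat (Xv a (k + 3) + (s : ℤ) • Xv a (k + 2))) (Xhat (Xv a (k + 3)))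
          = ((s : ℝ) * q (k + 2)) / (q (k + 3) + s * q (k + 2))
              * eucDist (Xhat (Xv a (k + 2))) (Xhat (Xv a (k + 3))) := by
      intro k
      exact eucDist_mediant s (Xv a (k + 2)) (Xv a (k + 3)) (Xv_q_pos a (k + 1))
        (Xv_q_pos a (k + 2))
    have hc : Tendsto (fun k : ℕ => ((s : ℝ) * q (k + 2)) / (q (k + 3) + s * q (k + 2)))
        atTop (𝓝 0) := by
      have hden : Tendsto (fun k : ℕ => q (k + 3) / q (k + 2) + (s : ℝ)) atTop atTop :=
        tendsto_atTop_add_const_right _ _ h3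
      have := (tendsto_const_nhds : Tendsto (fun _ : ℕ => (s : ℝ)) atTop (𝓝 (s : ℝ))).div_atTop
        hden
      refine this.congr fun k => ?_
      have h2pos := hqpos (k + 1)
      field_simp
    have := hc.mul h1
    rw [zero_mul] at this
    exact this.congr fun k => (heq k).symm
  · -- second limit
    have heq : ∀ k : ℕ,
        eucDist (Xhat (Xv a (k + 1) + Xv a (k + 3) + (s : ℤ) • Xv a (k + 2)))
            (Xhat (Xv a (k + 1) + Xv a (k + 3)))
          = ((s : ℝ) * q (k + 2)) / ((q (k + 1) + q (k + 3)) + s * q (k + 2))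
              * eucDist (Xhat (Xv a (k + 1) + Xv a (k + 3))) (Xhat (Xv a (k + 2))) := by
      intro k
      have hY : 0 < (Xv a (k + 1) + Xv a (k + 3)).1 := by
        have h0 := Xv_q_nonneg a (k + 1)
        have h1' := Xv_q_pos a (k + 2)
        simp only [Prod.fst_add]
        linarith
      have := eucDist_mediant s (Xv a (k + 2)) (Xv a (k + 1) + Xv a (k + 3))
        (Xv_q_pos a (k + 1)) hY
      rw [this, eucDist_comm' (Xhat (Xv a (k + 2)))]
      congr 2
      simp only [Prod.fst_add]
      push_cast
      ring
    have hc : Tendsto (fun k : ℕ =>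
        ((s : ℝ) * q (k + 2)) / ((q (k + 1) + q (k + 3)) + s * q (k + 2))) atTop (𝓝 0) := by
      have hden : Tendsto (fun k : ℕ =>
          (q (k + 1) + q (k + 3)) / q (k + 2) + (s : ℝ)) atTop atTop := by
        refine tendsto_atTop_mono (fun k => ?_) h3
        have h2pos := hqpos (k + 1)
        have h1nn := hqnn (k + 1)
        have hs : (0 : ℝ) ≤ s := by positivity
        rw [add_div]
        have : 0 ≤ q (k + 1) / q (k + 2) := div_nonneg h1nn h2pos.le
        linarith
      have := (tendsto_const_nhds : Tendsto (fun _ : ℕ => (s : ℝ)) atTop (𝓝 (s : ℝ))).div_atTop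
        hden
      refine this.congr fun k => ?_
      have h2pos := hqpos (k + 1)
      field_simp
    have := hc.mul h2
    rw [zero_mul] at this
    exact this.congr fun k => (heq k).symm

/-- if d(X̂_{k-1}, X̂_k) → l, d(X̂_{k-2} ⊕ X̂_k, X̂_{k-1}) → l, and
q_k/q_{k-1} → +∞, then for every non-negative integer s,
d(X̂_k ⊕_s X̂_{k-1}, X̂_k) → 0 and d((X̂_{k-2} ⊕ X̂_k) ⊕_s X̂_{k-1}, X̂_{k-2} ⊕ X̂_k) → 0.
(Recall `Xv a (k+3) = X_k`; mediants correspond to sums of vectors, and ⊕_s to adding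
s times the vector.) -/
theorem dist_mediant_s_limit (a : ℕ → ℕ) (l : ℝ) (hl : 0 < l)
    (h1 : Tendsto (fun k : ℕ => eucDist (Xhat (Xv a (k + 2))) (Xhat (Xv a (k + 3))))
      atTop (𝓝 l))
    (h2 : Tendsto (fun k : ℕ => eucDist (Xhat (Xv a (k + 1) + Xv a (k + 3))) (Xhat (Xv a (k + 2))))
      atTop (𝓝 l))
    (h3 : Tendsto (fun k : ℕ => ((Xv a (k + 3)).1 : ℝ) / ((Xv a (k + 2)).1 : ℝ))
      atTop atTop)
    (s : ℕ) :
    Tendsto (fun k : ℕ =>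
        eucDist (Xhat (Xv a (k + 3) + (s : ℤ) • Xv a (k + 2))) (Xhat (Xv a (k + 3))))
      atTop (𝓝 0) ∧
    Tendsto (fun k : ℕ =>
        eucDist (Xhat (Xv a (k + 1) + Xv a (k + 3) + (s : ℤ) • Xv a (k + 2)))
          (Xhat (Xv a (k + 1) + Xv a (k + 3))))
      atTop (𝓝 0) := by
  exact dist_mediant_s_limit' a l hl h1 h2 h3 s
end

section
/- Let ω be a finite binary word, ξ ∈ [0,1], and (α,β) := φ_ω(ξ,0), and suppose α or β is irrational. Then for every ε > 0, liminf over positive integers s of s^{4−ε} · (min over integers m of |α − m/s|) · (min over integers n of |β − n/s|) equals 0. -/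
open Filter

noncomputable def phi0 (p : ℝ × ℝ) : ℝ × ℝ := (1 / (1 + p.2), p.1 / (1 + p.2))
noncomputable def phi1 (p : ℝ × ℝ) : ℝ × ℝ := (p.1 / (1 + p.2), p.2 / (1 + p.2))

/-- The map corresponding to a letter: φ₀ for `false`, φ₁ for `true`. -/
noncomputable def phiOf : Bool → (ℝ × ℝ → ℝ × ℝ)
  | false => phi0
  | true => phi1

/-- The composition φ_ω = φ_{ω₀} ∘ φ_{ω₁} ∘ ⋯ ∘ φ_{ω_{n-1}}. -/
noncomputable def phiWord : List Bool → (ℝ × ℝ → ℝ × ℝ)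
  | [] => id
  | b :: t => phiOf b ∘ phiWord t

/-!
In homogeneous coordinates `(x : y : z) ↦ (x/z, y/z)` the maps `φ₀, φ₁` are integer linear
maps, so `(α, β) = (u(ξ, 1), v(ξ, 1)) / w(ξ, 1)` for integer linear forms `u, v, w` on `ℤ²`,
and `ξ` is irrational. If `p/q` is a Dirichlet approximation of `ξ`, i.e. `|qξ - p| < 1/q`, then
`s = w(p, q) ≍ q` and `m = u(p, q)`, `n = v(p, q)` satisfy
`|α - m/s|, |β - n/s| ≪ |qξ - p| / s ≪ 1/s²`, so the product in the liminf is `≪ s^(-ε)`.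
-/

open Topology

section Homogeneous

variable {R S : Type*}

def phiOfHom [Add R] : Bool → R × R × R → R × R × R
  | false, v => (v.2.2, v.1, v.2.1 + v.2.2)
  | true, v => (v.1, v.2.1, v.2.1 + v.2.2)

def phiWordHom [Add R] : List Bool → R × R × R → R × R × R
  | [] => id
  | b :: t => phiOfHom b ∘ phiWordHom t

lemma phiWordHom_map [AddZeroClass R] [AddZeroClass S] (f : R →+ S) (ω : List Bool)
    (v : R × R × R) :
    phiWordHom ω (f v.1, f v.2.1, f v.2.2) =
      (f (phiWordHom ω v).1, f (phiWordHom ω v).2.1, f (phiWordHom ω v).2.2) := by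
  induction ω with
  | nil => rfl
  | cons b t ih => cases b <;> simp [phiWordHom, phiOfHom, ih]

noncomputable def dehomogenize (v : ℝ × ℝ × ℝ) : ℝ × ℝ := (v.1 / v.2.2, v.2.1 / v.2.2)

def homCone : Set (ℝ × ℝ × ℝ) := {v | 0 ≤ v.1 ∧ 0 ≤ v.2.1 ∧ 0 < v.2.2}

lemma phiOfHom_mem_homCone (b : Bool) {v : ℝ × ℝ × ℝ} (hv : v ∈ homCone) :
    phiOfHom b v ∈ homCone := by
  obtain ⟨hx, hy, hz⟩ := hv
  cases b <;> exact ⟨by simp [phiOfHom]; positivity, by simp [phiOfHom]; positivity,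
    by simp [phiOfHom]; positivity⟩

lemma phiWordHom_mem_homCone (ω : List Bool) {v : ℝ × ℝ × ℝ} (hv : v ∈ homCone) :
    phiWordHom ω v ∈ homCone := by
  induction ω with
  | nil => exact hv
  | cons b t ih => exact phiOfHom_mem_homCone b ih

lemma phiOf_dehomogenize (b : Bool) {v : ℝ × ℝ × ℝ} (hv : v ∈ homCone) :
    phiOf b (dehomogenize v) = dehomogenize (phiOfHom b v) := by
  obtain ⟨-, hy, hz⟩ := hv
  have hyz : v.2.1 + v.2.2 ≠ 0 := by positivity
  cases b <;> simp only [phiOf, phi0, phi1, dehomogenize, phiOfHom] <;> ext <;> field_simp <;>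
    ring

lemma phiWord_dehomogenize (ω : List Bool) {v : ℝ × ℝ × ℝ} (hv : v ∈ homCone) :
    phiWord ω (dehomogenize v) = dehomogenize (phiWordHom ω v) := by
  induction ω with
  | nil => rfl
  | cons b t ih =>
    simp only [phiWord, phiWordHom, Function.comp_apply, ih]
    exact phiOf_dehomogenize b (phiWordHom_mem_homCone t hv)

end Homogeneous

section Forms

noncomputable def evalForm (x z : ℝ) : ℤ × ℤ →+ ℝ :=
  (zmultiplesHom ℝ x).coprod (zmultiplesHom ℝ z)

@[simp]
lemma evalForm_apply (x z : ℝ) (u : ℤ × ℤ) : evalForm x z u = u.1 * x + u.2 * z := by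
  simp [evalForm, zsmul_eq_mul]

/-- Running `phiWordHom` on coordinates in `ℤ × ℤ` yields the integer linear forms in `(x, z)`
whose values are the coordinates of `phiWordHom ω (x, 0, z)`. -/
def wordForms (ω : List Bool) : (ℤ × ℤ) × (ℤ × ℤ) × (ℤ × ℤ) :=
  phiWordHom ω ((1, 0), 0, (0, 1))

lemma phiWordHom_eq_evalForm (ω : List Bool) (x z : ℝ) :
    phiWordHom ω (x, 0, z) = (evalForm x z (wordForms ω).1, evalForm x z (wordForms ω).2.1,
      evalForm x z (wordForms ω).2.2) := by
  simpa [wordForms] using phiWordHom_map (evalForm x z) ω ((1, 0), 0, (0, 1))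

lemma Irrational.of_evalForm_div {ξ : ℝ} {u w : ℤ × ℤ}
    (h : Irrational (evalForm ξ 1 u / evalForm ξ 1 w)) : Irrational ξ := by
  rintro ⟨q, rfl⟩
  exact h ⟨(u.1 * q + u.2) / (w.1 * q + w.2), by simp⟩

def cross (u w : ℤ × ℤ) : ℤ := u.1 * w.2 - u.2 * w.1

lemma evalForm_div_sub_evalForm_div (u w : ℤ × ℤ) {ξ p q : ℝ} (hc : evalForm ξ 1 w ≠ 0)
    (hs : evalForm p q w ≠ 0) :
    evalForm ξ 1 u / evalForm ξ 1 w - evalForm p q u / evalForm p q w =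
      cross u w * (q * ξ - p) / (evalForm ξ 1 w * evalForm p q w) := by
  rw [div_sub_div _ _ hc hs]
  simp only [evalForm_apply, cross]
  push_cast
  ring

end Forms

section Approximation

noncomputable def approxDist (x : ℝ) (s : ℕ) : ℝ := ⨅ m : ℤ, |x - m / s|

lemma approxDist_nonneg (x : ℝ) (s : ℕ) : 0 ≤ approxDist x s :=
  Real.iInf_nonneg fun _ => abs_nonneg _

lemma approxDist_le (x : ℝ) (s : ℕ) (m : ℤ) : approxDist x s ≤ |x - m / s| :=
  ciInf_le ⟨0, by rintro _ ⟨m, rfl⟩; exact abs_nonneg _⟩ m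

/-- Rationals with denominator `≤ Q` stay some distance `δ` away from `ξ`, while good
approximations of `ξ` come arbitrarily close. -/
lemma Irrational.exists_rat_abs_sub_lt_one_div_den_sq_and_lt_den {ξ : ℝ} (hξ : Irrational ξ)
    (Q : ℕ) : ∃ r : ℚ, |ξ - r| < 1 / (r.den : ℝ) ^ 2 ∧ Q < r.den := by
  obtain ⟨δ, hfar, hδ⟩ := ((hξ.eventually_forall_le_dist_cast_rat_of_den_le Q).filter_mono
    nhdsWithin_le_nhds |>.and (self_mem_nhdsWithin : Set.Ioi (0 : ℝ) ∈ 𝓝[>] 0)).exists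
  obtain ⟨r₀, hr₀, hr₀'⟩ := exists_rat_btwn (lt_add_of_pos_right ξ hδ)
  obtain ⟨r, hr, hcloser⟩ := Real.exists_rat_abs_sub_lt_and_lt_of_irrational hξ r₀
  refine ⟨r, hr, lt_of_not_ge fun hden => ?_⟩
  have hr₀δ : |ξ - r₀| < δ := by rw [abs_sub_lt_iff]; constructor <;> linarith
  linarith [Real.dist_eq ξ r ▸ hfar r hden]

lemma Irrational.exists_seq_abs_den_mul_sub_num_lt {ξ : ℝ} (hξ : Irrational ξ) :
    ∃ r : ℕ → ℚ, Tendsto (fun k => (r k).den) atTop atTop ∧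
      ∀ k, |(r k).den * ξ - (r k).num| < 1 / (r k).den := by
  choose r hr hden using hξ.exists_rat_abs_sub_lt_one_div_den_sq_and_lt_den
  refine ⟨r, tendsto_atTop_mono (fun k => (hden k).le) tendsto_id, fun k => ?_⟩
  have hq : (0 : ℝ) < (r k).den := by exact_mod_cast (r k).pos
  calc |(r k).den * ξ - (r k).num| = (r k).den * |ξ - r k| := by
        rw [← abs_of_pos hq, ← abs_mul, abs_of_pos hq, Rat.cast_def]; field_simp
    _ < (r k).den * (1 / (r k).den ^ 2) := mul_lt_mul_of_pos_left (hr k) hq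
    _ = 1 / (r k).den := by field_simp

lemma liminf_eq_zero_of_tendsto_comp {α ι : Type*} {l : Filter α} {l' : Filter ι} [l'.NeBot]
    {f : α → ℝ} (hf : ∀ x, 0 ≤ f x) {φ : ι → α} (hφ : Tendsto φ l' l)
    (h : Tendsto (f ∘ φ) l' (𝓝 0)) : liminf f l = 0 := by
  have hfreq : ∃ᶠ x in l, f x ≤ 1 :=
    hφ.frequently (h.eventually (ge_mem_nhds one_pos)).frequently
  refine le_antisymm ?_ (le_liminf_of_le (IsCoboundedUnder.of_frequently_le hfreq)
    (Eventually.of_forall hf))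
  exact (hφ.liminf_le_liminf_comp h.isCoboundedUnder_ge
    (isBoundedUnder_of ⟨0, hf⟩)).trans h.liminf_eq.le

variable (u v w : ℤ × ℤ) {ξ : ℝ}

lemma approxDist_evalForm_div_le (hc : 0 < evalForm ξ 1 w) (p : ℤ) {q s : ℕ} (hq : 0 < q)
    (hs : 0 < s) (hsw : (s : ℝ) = evalForm p q w) (hpq : |q * ξ - p| < 1 / q) :
    approxDist (evalForm ξ 1 u / evalForm ξ 1 w) s ≤
      |(cross u w : ℝ)| / (evalForm ξ 1 w * s * q) := by
  have hsR : (0 : ℝ) < s := by exact_mod_cast hs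
  have hqR : (0 : ℝ) < q := by exact_mod_cast hq
  calc approxDist _ s
      ≤ |evalForm ξ 1 u / evalForm ξ 1 w - evalForm p q u / evalForm p q w| := by
        simpa [hsw] using approxDist_le (evalForm ξ 1 u / evalForm ξ 1 w) s (u.1 * p + u.2 * q)
    _ = |(cross u w : ℝ)| * |q * ξ - p| / (evalForm ξ 1 w * s) := by
        rw [evalForm_div_sub_evalForm_div u w hc.ne' (hsw ▸ hsR.ne'), ← hsw, abs_div, abs_mul,
          abs_of_pos (mul_pos hc hsR)]
    _ ≤ |(cross u w : ℝ)| * (1 / q) / (evalForm ξ 1 w * s) := by gcongr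
    _ = |(cross u w : ℝ)| / (evalForm ξ 1 w * s * q) := by field_simp

lemma rpow_mul_approxDist_mul_approxDist_le (hc : 0 < evalForm ξ 1 w) (p : ℤ) {q s : ℕ}
    (hq : 0 < q) (hs : 0 < s) (hsw : (s : ℝ) = evalForm p q w) (hpq : |q * ξ - p| < 1 / q)
    (ε : ℝ) :
    (s : ℝ) ^ (4 - ε) * approxDist (evalForm ξ 1 u / evalForm ξ 1 w) s *
        approxDist (evalForm ξ 1 v / evalForm ξ 1 w) s ≤
      |(cross u w : ℝ)| * |(cross v w : ℝ)| / evalForm ξ 1 w ^ 2 * ((s : ℝ) / q) ^ 2 *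
        (s : ℝ) ^ (-ε) := by
  have hsR : (0 : ℝ) < s := by exact_mod_cast hs
  calc _ ≤ (s : ℝ) ^ (4 - ε) * (|(cross u w : ℝ)| / (evalForm ξ 1 w * s * q)) *
          (|(cross v w : ℝ)| / (evalForm ξ 1 w * s * q)) := by
        gcongr
        · exact approxDist_nonneg _ _
        · exact approxDist_evalForm_div_le u w hc p hq hs hsw hpq
        · exact approxDist_evalForm_div_le v w hc p hq hs hsw hpq
    _ = _ := by
        rw [sub_eq_add_neg, Real.rpow_add hsR, Real.rpow_ofNat]
        field_simp

lemma tendsto_evalForm_num_den_div_den {r : ℕ → ℚ}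
    (hden : Tendsto (fun k => (r k).den) atTop atTop)
    (hr : ∀ k, |(r k).den * ξ - (r k).num| < 1 / (r k).den) :
    Tendsto (fun k => evalForm (r k).num (r k).den w / (r k).den) atTop
      (𝓝 (evalForm ξ 1 w)) := by
  have hden' : Tendsto (fun k => ((r k).den : ℝ)) atTop atTop :=
    tendsto_natCast_atTop_iff.mpr hden
  have herr : Tendsto (fun k => ((r k).den : ℝ) * ξ - (r k).num) atTop (𝓝 0) :=
    squeeze_zero_norm (fun k => (hr k).le) (tendsto_const_nhds.div_atTop hden')
  have hdiv : ∀ k, evalForm (r k).num (r k).den w / (r k).den =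
      evalForm ξ 1 w - w.1 * (((r k).den : ℝ) * ξ - (r k).num) / (r k).den := fun k => by
    have : ((r k).den : ℝ) ≠ 0 := by exact_mod_cast (r k).pos.ne'
    simp only [evalForm_apply]
    field_simp
    ring
  have hlim := (tendsto_const_nhds (x := evalForm ξ 1 w)).sub
    ((herr.const_mul (w.1 : ℝ)).div_atTop hden')
  rw [sub_zero] at hlim
  exact hlim.congr fun k => (hdiv k).symm

theorem liminf_rpow_mul_approxDist_mul_approxDist_eq_zero (hξ : Irrational ξ)
    (hc : 0 < evalForm ξ 1 w) {ε : ℝ} (hε : 0 < ε) :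
    liminf (fun s : ℕ => (s : ℝ) ^ (4 - ε) * approxDist (evalForm ξ 1 u / evalForm ξ 1 w) s *
      approxDist (evalForm ξ 1 v / evalForm ξ 1 w) s) atTop = 0 := by
  obtain ⟨r, hden, hr⟩ := hξ.exists_seq_abs_den_mul_sub_num_lt
  set c := evalForm ξ 1 w
  set S : ℕ → ℤ := fun k => w.1 * (r k).num + w.2 * (r k).den
  have hS : ∀ k, (S k : ℝ) = evalForm (r k).num (r k).den w := fun k => by simp [S]
  have hratio : Tendsto (fun k => (S k : ℝ) / (r k).den) atTop (𝓝 c) := by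
    simpa only [hS] using tendsto_evalForm_num_den_div_den w hden hr
  have hS_top : Tendsto (fun k => (S k : ℝ)) atTop atTop := by
    refine (hratio.pos_mul_atTop hc (tendsto_natCast_atTop_iff.mpr hden)).congr fun k => ?_
    have : ((r k).den : ℝ) ≠ 0 := by exact_mod_cast (r k).pos.ne'
    field_simp
  have hS_pos : ∀ᶠ k in atTop, 0 < S k := by
    simpa using hS_top.eventually_gt_atTop 0
  have hF_nonneg : ∀ s : ℕ, 0 ≤ (s : ℝ) ^ (4 - ε) * approxDist (evalForm ξ 1 u / c) s *
      approxDist (evalForm ξ 1 v / c) s := fun s =>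
    mul_nonneg (mul_nonneg (Real.rpow_nonneg (Nat.cast_nonneg _) _) (approxDist_nonneg _ _))
      (approxDist_nonneg _ _)
  refine liminf_eq_zero_of_tendsto_comp hF_nonneg (φ := fun k => (S k).toNat)
    (tendsto_natCast_atTop_iff.mp (tendsto_atTop_mono
      (fun k => by exact_mod_cast Int.self_le_toNat (S k)) hS_top)) ?_
  have hbound := ((hratio.pow 2).const_mul (|(cross u w : ℝ)| * |(cross v w : ℝ)| / c ^ 2)).mul
    ((tendsto_rpow_neg_atTop hε).comp hS_top)
  refine squeeze_zero' (Eventually.of_forall fun k => hF_nonneg _) ?_ (by simpa using hbound)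
  filter_upwards [hS_pos] with k hk
  have hcast : (((S k).toNat : ℕ) : ℝ) = S k := by exact_mod_cast Int.toNat_of_nonneg hk.le
  have := rpow_mul_approxDist_mul_approxDist_le u v w hc (r k).num (r k).pos
    (Int.lt_toNat.mpr hk) (by rw [hcast, hS]) (hr k) ε
  rw [Function.comp_apply, hcast]
  rwa [hcast] at this

end Approximation

/-- if (α,β) = φ_ω(ξ,0) with ξ ∈ [0,1] and α or β irrational, then for
every ε > 0, liminf over positive integers s of
s^{4-ε} · (inf over m ∈ ℤ of |α - m/s|) · (inf over n ∈ ℤ of |β - n/s|) is 0. -/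
theorem liminf_simultaneous_approx (ω : List Bool) (ξ : ℝ) (hξ : ξ ∈ Set.Icc (0 : ℝ) 1)
    (hirr : Irrational (phiWord ω (ξ, 0)).1 ∨ Irrational (phiWord ω (ξ, 0)).2) :
    ∀ ε > (0 : ℝ),
      liminf (fun s : ℕ =>
        (s : ℝ) ^ ((4 : ℝ) - ε) *
          (⨅ m : ℤ, |(phiWord ω (ξ, 0)).1 - (m : ℝ) / (s : ℝ)|) *
          (⨅ n : ℤ, |(phiWord ω (ξ, 0)).2 - (n : ℝ) / (s : ℝ)|)) atTop = 0 := by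
  intro ε hε
  have hv : ((ξ, 0, 1) : ℝ × ℝ × ℝ) ∈ homCone := ⟨hξ.1, le_rfl, one_pos⟩
  have hαβ : phiWord ω (ξ, 0) = dehomogenize (phiWordHom ω (ξ, 0, 1)) := by
    simpa [dehomogenize] using phiWord_dehomogenize ω hv
  have hc := (phiWordHom_mem_homCone ω hv).2.2
  rw [phiWordHom_eq_evalForm] at hαβ hc
  have hξirr : Irrational ξ := by
    rcases hirr with h | h <;> rw [hαβ] at h <;> exact h.of_evalForm_div
  rw [hαβ]
  exact liminf_rpow_mul_approxDist_mul_approxDist_eq_zero _ _ _ hξirr hc hε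
end
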